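/- arXiv:1410.4116 — 3 statements merged into one kernel-verified Lean document; each statement's English description precedes it below -/
import Mathlib

section
/- Let n ≥ 2 and 1 ≤ ℓ ≤ n−1. For every constant c ≥ 0 and every integer d ≥ 0 there exists a constant C, depending only on c, d, n and ℓ, with the following property: if h(z) is a homogeneous holomorphic polynomial of degree d in z ∈ ℂⁿ such that |h(z)| ≤ c·|z|^d for every z ∈ ℂⁿ lying on the null cone {z ∈ ℂⁿ : |z|²_ℓ = 0}, then ‖h‖ ≤ C. -/
open MvPolynomial

/-- The maximum of the moduli of the coefficients of a multivariate polynomial. -/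
noncomputable def polyNorm {σ : Type*} (p : MvPolynomial σ ℂ) : ℝ :=
  ((p.support.sup fun d => ‖p.coeff d‖₊ : NNReal) : ℝ)

/-- Discrete orthogonality of roots of unity. -/
lemma orth_aux (m : ℕ) (hm : 0 < m) (a b : ℕ) (ha : a < m) (hb : b < m) :
    ∑ i ∈ Finset.range m,
      (Complex.exp (2 * Real.pi * Complex.I / m) ^ a *
        (Complex.exp (2 * Real.pi * Complex.I / m) ^ b)⁻¹) ^ i
      = if a = b then (m : ℂ) else 0 := by
  set ω : ℂ := Complex.exp (2 * Real.pi * Complex.I / m) with hω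
  have hprim : IsPrimitiveRoot ω m := Complex.isPrimitiveRoot_exp m hm.ne'
  have hω0 : ω ≠ 0 := Complex.exp_ne_zero _
  by_cases hab : a = b
  · subst hab
    simp [mul_inv_cancel₀ (pow_ne_zero a hω0)]
  · have hζ1 : ω ^ a * (ω ^ b)⁻¹ ≠ 1 := by
      intro hcon
      exact hab (hprim.pow_inj ha hb ((mul_inv_eq_one₀ (pow_ne_zero b hω0)).mp hcon))
    have hζm : (ω ^ a * (ω ^ b)⁻¹) ^ m = 1 := by
      rw [mul_pow, inv_pow, ← pow_mul, ← pow_mul, mul_comm a m, mul_comm b m,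
        pow_mul, pow_mul, hprim.pow_eq_one, one_pow, one_pow, inv_one, mul_one]
    rw [geom_sum_eq hζ1, hζm, sub_self, zero_div, if_neg hab]

lemma supp_le {n d : ℕ} {h : MvPolynomial (Fin n) ℂ} (hh : h.IsHomogeneous d)
    {β : Fin n →₀ ℕ} (hβ : β ∈ h.support) (j : Fin n) : β j ≤ d := by
  have h2 := hh (MvPolynomial.mem_support_iff.mp hβ)
  rw [show (Finsupp.weight 1 : (Fin n →₀ ℕ) →+ ℕ) = Finsupp.weight (fun _ => 1) from rfl,
    ← Finsupp.degree_eq_weight_one] at h2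
  rw [← h2]
  exact Finsupp.le_degree j β

theorem homogeneous_bound_on_null_cone (n ℓ : ℕ) (hn : 2 ≤ n)
    (hℓ1 : 1 ≤ ℓ) (hℓ2 : ℓ ≤ n - 1) (c : ℝ) (hc : 0 ≤ c) (d : ℕ) :
    ∃ C : ℝ, ∀ h : MvPolynomial (Fin n) ℂ,
      h.IsHomogeneous d →
      (∀ z : Fin n → ℂ,
        (∑ j : Fin n, (if (j : ℕ) < ℓ then (-1 : ℝ) else 1) * ‖z j‖ ^ 2) = 0 →
        ‖MvPolynomial.eval z h‖ ≤ c * Real.sqrt (∑ j : Fin n, ‖z j‖ ^ 2) ^ d) →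
      polyNorm h ≤ C := by
  classical
  have hℓn : ℓ < n := by omega
  have hcast : (ℓ : ℝ) + 1 ≤ (n : ℝ) := by exact_mod_cast hℓn
  set m : ℕ := d + 1 with hmdef
  have hm : 0 < m := Nat.succ_pos d
  set ω : ℂ := Complex.exp (2 * Real.pi * Complex.I / m) with hωdef
  have hω0 : ω ≠ 0 := Complex.exp_ne_zero _
  have hωabs : ‖ω‖ = 1 := by
    rw [hωdef]
    have : 2 * (Real.pi : ℂ) * Complex.I / m = ((2 * Real.pi / m : ℝ) : ℂ) * Complex.I := by
      push_cast
      ring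
    rw [this, Complex.norm_exp_ofReal_mul_I]
  -- the radii
  set r : Fin n → ℝ := fun j => if (j : ℕ) < ℓ then Real.sqrt ((n : ℝ) - ℓ) else Real.sqrt ℓ
    with hrdef
  have hge1 : (1 : ℝ) ≤ Real.sqrt ℓ := by
    rw [show (1:ℝ) = Real.sqrt 1 by simp]
    exact Real.sqrt_le_sqrt (by exact_mod_cast hℓ1)
  have hge1' : (1 : ℝ) ≤ Real.sqrt ((n : ℝ) - ℓ) := by
    rw [show (1:ℝ) = Real.sqrt 1 by simp]
    exact Real.sqrt_le_sqrt (by linarith)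
  have hr1 : ∀ j, 1 ≤ r j := by
    intro j; rw [hrdef]; dsimp only
    split <;> assumption
  have hr0 : ∀ j, 0 ≤ r j := fun j => le_trans zero_le_one (hr1 j)
  have hrsq : ∀ j : Fin n, r j ^ 2 = if (j : ℕ) < ℓ then ((n : ℝ) - ℓ) else (ℓ : ℝ) := by
    intro j; rw [hrdef]; dsimp only
    split
    · rw [Real.sq_sqrt (by linarith)]
    · rw [Real.sq_sqrt (by positivity)]
  set S : ℝ := ∑ j : Fin n, r j ^ 2 with hSdef
  refine ⟨c * Real.sqrt S ^ d, ?_⟩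
  intro h hhom hbound
  -- the evaluation points
  set z : (Fin n → Fin m) → Fin n → ℂ := fun k j => (r j : ℂ) * ω ^ (k j : ℕ) with hzdef
  have hznorm : ∀ k j, ‖z k j‖ = r j := by
    intro k j
    rw [hzdef]; dsimp only
    rw [norm_mul, norm_pow, hωabs, one_pow, mul_one, Complex.norm_real,
      Real.norm_of_nonneg (hr0 j)]
  have hnull : ∀ k, ∑ j : Fin n, (if (j : ℕ) < ℓ then (-1 : ℝ) else 1) * ‖z k j‖ ^ 2 = 0 := by
    intro k
    have heq : ∀ j : Fin n, (if (j : ℕ) < ℓ then (-1 : ℝ) else 1) * ‖z k j‖ ^ 2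
        = if (j : ℕ) < ℓ then -((n : ℝ) - ℓ) else (ℓ : ℝ) := by
      intro j
      rw [hznorm, hrsq]
      split <;> ring
    rw [Finset.sum_congr rfl fun j _ => heq j]
    rw [Fin.sum_univ_eq_sum_range (fun j => if j < ℓ then -((n : ℝ) - ℓ) else (ℓ : ℝ)) n]
    rw [Finset.range_eq_Ico, ← Finset.sum_Ico_consecutive _ (Nat.zero_le ℓ) (le_of_lt hℓn)]
    have h1 : ∑ j ∈ Finset.Ico 0 ℓ, (if j < ℓ then -((n : ℝ) - ℓ) else (ℓ : ℝ))
        = (ℓ : ℝ) * (-((n : ℝ) - ℓ)) := by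
      rw [Finset.sum_congr rfl fun j hj => if_pos (Finset.mem_Ico.mp hj).2,
        Finset.sum_const, Nat.card_Ico, Nat.sub_zero, nsmul_eq_mul]
    have h2 : ∑ j ∈ Finset.Ico ℓ n, (if j < ℓ then -((n : ℝ) - ℓ) else (ℓ : ℝ))
        = ((n - ℓ : ℕ) : ℝ) * (ℓ : ℝ) := by
      rw [Finset.sum_congr rfl fun j hj => if_neg (by
        have := (Finset.mem_Ico.mp hj).1; omega),
        Finset.sum_const, Nat.card_Ico, nsmul_eq_mul]
    rw [h1, h2, Nat.cast_sub (le_of_lt hℓn)]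
    ring
  have hzsum : ∀ k, ∑ j : Fin n, ‖z k j‖ ^ 2 = S := by
    intro k
    rw [hSdef]
    exact Finset.sum_congr rfl fun j _ => by rw [hznorm]
  have hB : ∀ k, ‖MvPolynomial.eval (z k) h‖ ≤ c * Real.sqrt S ^ d := by
    intro k
    have := hbound (z k) (hnull k)
    rwa [hzsum k] at this
  -- coefficient bound
  have key : ∀ α ∈ h.support, ‖h.coeff α‖ ≤ c * Real.sqrt S ^ d := by
    intro α hα
    have hαle : ∀ j, α j < m := fun j => Nat.lt_succ_of_le (supp_le hhom hα j)
    set T : ℂ := ∑ k : Fin n → Fin m,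
      MvPolynomial.eval (z k) h * ∏ j : Fin n, ((ω ^ (α j))⁻¹) ^ (k j : ℕ) with hTdef
    set R : ℝ := ∏ j : Fin n, r j ^ (α j) with hRdef
    have hR1 : 1 ≤ R := by
      rw [hRdef]
      calc (1:ℝ) = ∏ _j : Fin n, 1 := by simp
      _ ≤ ∏ j, r j ^ α j :=
        Finset.prod_le_prod (fun i _ => zero_le_one) (fun i _ => one_le_pow₀ (hr1 i))
    have hTid : T = h.coeff α * (R : ℂ) * (m : ℂ) ^ n := by
      have step0 : ∀ (k : Fin n → Fin m),
          MvPolynomial.eval (z k) h * ∏ j : Fin n, ((ω ^ (α j))⁻¹) ^ (k j : ℕ)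
          = ∑ β ∈ h.support, h.coeff β *
              ∏ j : Fin n, (((r j : ℂ)) ^ (β j) * (ω ^ (β j) * (ω ^ (α j))⁻¹) ^ (k j : ℕ)) := by
        intro k
        rw [MvPolynomial.eval_eq', Finset.sum_mul]
        refine Finset.sum_congr rfl fun β _ => ?_
        rw [mul_assoc, ← Finset.prod_mul_distrib]
        congr 1
        refine Finset.prod_congr rfl fun j _ => ?_
        rw [hzdef]; dsimp only
        rw [mul_pow, mul_pow, ← pow_mul, ← pow_mul, mul_comm ((k j : ℕ)) (β j), mul_assoc]
      rw [hTdef, Finset.sum_congr rfl fun k _ => step0 k, Finset.sum_comm]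
      have step1 : ∀ β ∈ h.support,
          (∑ k : Fin n → Fin m, h.coeff β *
            ∏ j : Fin n, ((r j : ℂ)) ^ (β j) * (ω ^ (β j) * (ω ^ (α j))⁻¹) ^ (k j : ℕ))
          = h.coeff β * ((∏ j : Fin n, ((r j : ℂ)) ^ (β j)) *
              ∏ j : Fin n, (if β j = α j then (m : ℂ) else 0)) := by
        intro β hβ
        rw [← Finset.mul_sum]
        congr 1
        have hswap := Finset.prod_univ_sum (fun _ : Fin n => (Finset.univ : Finset (Fin m)))
          (fun j i => ((r j : ℂ)) ^ (β j) * (ω ^ (β j) * (ω ^ (α j))⁻¹) ^ (i : ℕ))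
        rw [Fintype.piFinset_univ] at hswap
        rw [← hswap, ← Finset.prod_mul_distrib]
        refine Finset.prod_congr rfl fun j _ => ?_
        rw [← Finset.mul_sum]
        congr 1
        rw [Fin.sum_univ_eq_sum_range (fun i => (ω ^ (β j) * (ω ^ (α j))⁻¹) ^ i) m]
        exact orth_aux m hm (β j) (α j) (Nat.lt_succ_of_le (supp_le hhom hβ j)) (hαle j)
      rw [Finset.sum_congr rfl step1]
      rw [Finset.sum_eq_single_of_mem α hα (fun β _ hβα => by
        obtain ⟨j, hj⟩ : ∃ j, β j ≠ α j := by
          by_contra hcon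
          push_neg at hcon
          exact hβα (Finsupp.ext hcon)
        have hz : (∏ j : Fin n, if β j = α j then (m : ℂ) else 0) = 0 :=
          Finset.prod_eq_zero (Finset.mem_univ j) (if_neg hj)
        rw [hz, mul_zero, mul_zero])]
      rw [Finset.prod_congr rfl (fun j _ => if_pos rfl), Finset.prod_const,
        Finset.card_univ, Fintype.card_fin]
      have : ((R : ℝ) : ℂ) = ∏ j : Fin n, ((r j : ℂ)) ^ (α j) := by
        rw [hRdef]
        push_cast
        rfl
      rw [this]
      ring
    have hfac : ∀ k : Fin n → Fin m, ‖∏ j : Fin n, ((ω ^ (α j))⁻¹) ^ (k j : ℕ)‖ = 1 := by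
      intro k
      rw [norm_prod]
      refine Finset.prod_eq_one fun j _ => ?_
      rw [norm_pow, norm_inv, norm_pow, hωabs, one_pow, inv_one, one_pow]
    have hTbound : ‖T‖ ≤ (m : ℝ) ^ n * (c * Real.sqrt S ^ d) := by
      calc ‖T‖ ≤ ∑ k : Fin n → Fin m,
          ‖MvPolynomial.eval (z k) h * ∏ j : Fin n, ((ω ^ (α j))⁻¹) ^ (k j : ℕ)‖ := by
            rw [hTdef]; exact norm_sum_le _ _
      _ ≤ ∑ _k : Fin n → Fin m, (c * Real.sqrt S ^ d) := by
            refine Finset.sum_le_sum fun k _ => ?_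
            rw [norm_mul, hfac k, mul_one]
            exact hB k
      _ = (m : ℝ) ^ n * (c * Real.sqrt S ^ d) := by
            rw [Finset.sum_const, Finset.card_univ, Fintype.card_fun, Fintype.card_fin,
              Fintype.card_fin, nsmul_eq_mul]
            push_cast
            ring
    have hTval : ‖T‖ = ‖h.coeff α‖ * R * (m : ℝ) ^ n := by
      rw [hTid, norm_mul, norm_mul]
      congr 1
      · congr 1
        rw [Complex.norm_real, Real.norm_of_nonneg (le_trans zero_le_one hR1)]
      · rw [norm_pow, Complex.norm_natCast]
    rw [hTval] at hTbound
    have hmn : (0:ℝ) < (m : ℝ) ^ n := by positivity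
    have h1 : ‖h.coeff α‖ * R ≤ c * Real.sqrt S ^ d :=
      (mul_le_mul_iff_of_pos_right hmn).mp (by linarith)
    calc ‖h.coeff α‖ = ‖h.coeff α‖ * 1 := by ring
    _ ≤ ‖h.coeff α‖ * R := mul_le_mul_of_nonneg_left hR1 (norm_nonneg _)
    _ ≤ c * Real.sqrt S ^ d := h1
  -- conclude for polyNorm
  have hC0 : 0 ≤ c * Real.sqrt S ^ d := by positivity
  rw [polyNorm, ← Real.coe_toNNReal (c * Real.sqrt S ^ d) hC0, NNReal.coe_le_coe]
  apply Finset.sup_le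
  intro α hα
  rw [Real.le_toNNReal_iff_coe_le hC0]
  exact key α hα
end

section
/- Let n ≥ 2 and 0 ≤ ℓ ≤ n. Let {φ_j}_{j=1}^{n-1} and {ψ_j}_{j=1}^{n-1} be two families of entire holomorphic functions on ℂⁿ, and let B(z, ξ) be a real-analytic function on ℂⁿ × ℂⁿ (i.e., analytic as a function of the underlying real coordinates). Suppose that ∑_{j=1}^{n-1} φ_j(z) ψ_j(ξ) = B(z, ξ)·⟨z, ξ⟩_ℓ for all (z, ξ) ∈ ℂⁿ × ℂⁿ. Then B ≡ 0 and ∑_{j=1}^{n-1} φ_j(z) ψ_j(ξ) ≡ 0. -/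
private lemma exists_det_ne_zero {X : Type*} : ∀ {r : ℕ} (a : Fin r → X → ℂ),
    LinearIndependent ℂ a →
    ∃ p : Fin r → X, Matrix.det (Matrix.of fun i j => a j (p i)) ≠ 0 := by
  intro r
  induction r with
  | zero =>
    intro a _
    exact ⟨fun i => i.elim0, by rw [Matrix.det_isEmpty]; exact one_ne_zero⟩
  | succ r ih =>
    intro a ha
    obtain ⟨p', hp'⟩ := ih (fun i => a (Fin.castSucc i))
      (ha.comp Fin.castSucc (Fin.castSucc_injective r))
    set g : Fin (r + 1) → ℂ := fun j =>
      (-1 : ℂ) ^ (j : ℕ) *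
        Matrix.det (Matrix.of fun i' j' : Fin r => a (j.succAbove j') (p' i')) with hgdef
    have hglast : g (Fin.last r) ≠ 0 := by
      have h1 : (Matrix.of fun i' j' : Fin r => a ((Fin.last r).succAbove j') (p' i'))
          = Matrix.of fun i' j' : Fin r => a (Fin.castSucc j') (p' i') := by
        ext i' j'
        rw [Fin.succAbove_last]
      rw [hgdef]
      simp only [h1]
      exact mul_ne_zero (pow_ne_zero _ (neg_ne_zero.mpr one_ne_zero)) hp'
    have hne : ¬ (∀ x : X, ∑ j, g j * a j x = 0) := by
      intro hzero
      refine hglast (Fintype.linearIndependent_iff.mp ha g ?_ (Fin.last r))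
      funext x
      simpa [Finset.sum_apply] using hzero x
    push_neg at hne
    obtain ⟨x, hx⟩ := hne
    set p : Fin (r + 1) → X := Fin.cons (α := fun _ => X) x p' with hpdef
    refine ⟨p, ?_⟩
    rw [Matrix.det_succ_row_zero]
    have hrw : ∀ j : Fin (r + 1),
        (-1 : ℂ) ^ (j : ℕ) * (Matrix.of fun i k => a k (p i)) 0 j *
          (((Matrix.of fun i k => a k (p i)).submatrix Fin.succ j.succAbove).det)
          = g j * a j x := by
      intro j
      have h2 : ((Matrix.of fun i k => a k (p i)).submatrix Fin.succ j.succAbove)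
          = Matrix.of fun i' j' : Fin r => a (j.succAbove j') (p' i') := by
        ext i' j'
        simp [Matrix.submatrix, hpdef, Fin.cons_succ]
      rw [h2]
      simp only [Matrix.of_apply, hpdef, Fin.cons_zero, hgdef]
      ring
    rw [Finset.sum_congr rfl fun j _ => hrw j]
    exact hx

private lemma exists_perp {n r : ℕ} (hr : r < n) (ε : Fin n → ℂ) (p : Fin r → Fin n → ℂ) :
    ∃ ξ : Fin n → ℂ, ξ ≠ 0 ∧ ∀ i, ∑ k, ε k * p i k * ξ k = 0 := by
  by_contra h
  push_neg at h
  set L : (Fin n → ℂ) →ₗ[ℂ] (Fin r → ℂ) :=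
    { toFun := fun ξ i => ∑ k, ε k * p i k * ξ k
      map_add' := by
        intro x y
        funext i
        simp [mul_add, Finset.sum_add_distrib]
      map_smul' := by
        intro c x
        funext i
        simp only [Pi.smul_apply, smul_eq_mul, RingHom.id_apply, Finset.mul_sum]
        exact Finset.sum_congr rfl fun k _ => by ring } with hLdef
  have hker : ∀ ξ, L ξ = 0 → ξ = 0 := by
    intro ξ hξ
    by_contra h0
    obtain ⟨i, hi⟩ := h ξ h0
    exact hi (congrFun hξ i)
  have hinj : Function.Injective L := by
    rw [injective_iff_map_eq_zero]
    exact hker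
  have hle := LinearMap.finrank_le_finrank_of_injective hinj
  simp only [Module.finrank_pi, Fintype.card_fin] at hle
  omega

private lemma core (n ℓ : ℕ) : ∀ r : ℕ, r < n →
    ∀ (a b : Fin r → (Fin n → ℂ) → ℂ),
    (∀ j, Continuous (a j)) →
    (∀ j, AnalyticOnNhd ℂ (b j) Set.univ) →
    (∀ z ξ : Fin n → ℂ,
      (∑ k : Fin n, (if (k : ℕ) < ℓ then (-1 : ℂ) else 1) * z k * ξ k) = 0 →
      ∑ j, a j z * b j ξ = 0) →
    ∀ z ξ : Fin n → ℂ, ∑ j, a j z * b j ξ = 0 := by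
  set ε : Fin n → ℂ := fun k => if (k : ℕ) < ℓ then (-1 : ℂ) else 1 with hεdef
  have hεne : ∀ k, ε k ≠ 0 := by
    intro k
    show (if (k : ℕ) < ℓ then (-1 : ℂ) else 1) ≠ 0
    split <;> norm_num
  intro r
  induction r with
  | zero =>
    intro _ a b _ _ _ z ξ
    simp
  | succ r ih =>
    intro hrn a b hacont hbana hvan
    by_cases hind : LinearIndependent ℂ a
    · -- independent case
      obtain ⟨p, hp⟩ := exists_det_ne_zero a hind
      obtain ⟨ξ', hξ'ne, hξ'p⟩ := exists_perp hrn ε p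
      obtain ⟨c, hc⟩ : ∃ c, ξ' c ≠ 0 := by
        by_contra hcon
        push_neg at hcon
        exact hξ'ne (funext hcon)
      set t : ℂ := (ε c * ξ' c)⁻¹ with htdef
      set ξ0 : Fin n → ℂ := t • ξ' with hξ0def
      have htne : ε c * ξ' c ≠ 0 := mul_ne_zero (hεne c) hc
      have hξ0c : ε c * ξ0 c = 1 := by
        simp only [hξ0def, htdef, Pi.smul_apply, smul_eq_mul]
        field_simp
        exact div_self (hεne c)
      have hξ0p : ∀ i, ∑ k, ε k * p i k * ξ0 k = 0 := by
        intro i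
        have : ∑ k, ε k * p i k * ξ0 k = t * ∑ k, ε k * p i k * ξ' k := by
          rw [Finset.mul_sum]
          refine Finset.sum_congr rfl fun k _ => ?_
          simp only [hξ0def, Pi.smul_apply, smul_eq_mul]
          ring
        rw [this, hξ'p i, mul_zero]
      -- the moved point
      set q : (Fin n → ℂ) → (Fin n → ℂ) → (Fin n → ℂ) := fun ξ w => fun k =>
        (ε c * ξ c) * w k - (if k = c then (∑ k', ε k' * w k' * ξ k') else 0) with hqdef
      have hqperp : ∀ ξ w, ∑ k, ε k * q ξ w k * ξ k = 0 := by
        intro ξ w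
        have expand : ∀ k, ε k * q ξ w k * ξ k =
            (ε c * ξ c) * (ε k * w k * ξ k) -
              (if k = c then (∑ k', ε k' * w k' * ξ k') * (ε c * ξ c) else 0) := by
          intro k
          simp only [hqdef]
          by_cases hk : k = c
          · subst hk
            simp only [eq_self_iff_true, if_true]
            ring
          · simp only [if_neg hk]
            ring
        rw [Finset.sum_congr rfl fun k _ => expand k, Finset.sum_sub_distrib,
          ← Finset.mul_sum, Finset.sum_ite_eq' Finset.univ c]
        simp only [Finset.mem_univ, if_true]
        ring
      have hq0 : ∀ i, q ξ0 (p i) = p i := by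
        intro i
        funext k
        rw [hqdef]
        simp only [hξ0p i, hξ0c]
        split <;> ring
      set M : (Fin n → ℂ) → Matrix (Fin (r + 1)) (Fin (r + 1)) ℂ :=
        fun ξ => Matrix.of fun i j => a j (q ξ (p i)) with hMdef
      have hqcont : ∀ i, Continuous fun ξ => q ξ (p i) := by
        intro i
        apply continuous_pi
        intro k
        apply Continuous.sub
        · exact (continuous_const.mul (continuous_apply c)).mul continuous_const
        · by_cases hk : k = c
          · simp only [hk, if_true]
            apply continuous_finset_sum
            intro k' _
            exact continuous_const.mul (continuous_apply k')
          · simp only [hk, if_false]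
            exact continuous_const
      have hMcont : Continuous fun ξ => (M ξ).det := by
        apply Continuous.matrix_det
        apply continuous_matrix
        intro i j
        exact (hacont j).comp (hqcont i)
      have hM0 : (M ξ0).det ≠ 0 := by
        have : M ξ0 = Matrix.of fun i j => a j (p i) := by
          ext i j
          rw [hMdef]
          simp [hq0 i]
        rw [this]
        exact hp
      have hbz : ∀ j, b j =ᶠ[nhds ξ0] 0 := by
        have hev : ∀ᶠ ξ in nhds ξ0, (M ξ).det ≠ 0 :=
          hMcont.continuousAt.eventually_ne hM0
        intro j
        filter_upwards [hev] with ξ hdet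
        have hmv : (M ξ).mulVec (fun j => b j ξ) = 0 := by
          funext i
          have := hvan (q ξ (p i)) ξ (hqperp ξ (p i))
          simpa [Matrix.mulVec, dotProduct, hMdef] using this
        have := Matrix.eq_zero_of_mulVec_eq_zero hdet hmv
        simpa using congrFun this j
      have hb0 : ∀ j ξ, b j ξ = 0 := by
        intro j ξ
        have := (hbana j).eqOn_zero_of_preconnected_of_eventuallyEq_zero
          isPreconnected_univ (Set.mem_univ ξ0) (hbz j)
        exact this (Set.mem_univ ξ)
      intro z ξ
      simp [hb0]
    · -- dependent case
      obtain ⟨g, hgsum, j₀, hgj₀⟩ := Fintype.not_linearIndependent_iff.mp hind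
      set σ : Fin r → Fin (r + 1) := j₀.succAbove with hσdef
      set a' : Fin r → (Fin n → ℂ) → ℂ := fun i => a (σ i) with ha'def
      set b' : Fin r → (Fin n → ℂ) → ℂ :=
        fun i ξ => b (σ i) ξ - g (σ i) / g j₀ * b j₀ ξ with hb'def
      have hrel : ∀ z, g j₀ * a j₀ z + ∑ i, g (σ i) * a (σ i) z = 0 := by
        intro z
        have h1 : ∑ j, g j * a j z = 0 := by
          have := congrFun hgsum z
          simpa [Finset.sum_apply] using this
        rw [Fin.sum_univ_succAbove (fun j => g j * a j z) j₀] at h1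
        exact h1
      have htrans : ∀ z ξ, ∑ i, a' i z * b' i ξ = ∑ j, a j z * b j ξ := by
        intro z ξ
        have h2 : ∑ i, a' i z * b' i ξ =
            ∑ i, a (σ i) z * b (σ i) ξ - (∑ i, g (σ i) * a (σ i) z) * (b j₀ ξ / g j₀) := by
          rw [Finset.sum_mul, ← Finset.sum_sub_distrib]
          refine Finset.sum_congr rfl fun i _ => ?_
          simp only [ha'def, hb'def]
          ring
        have h3 : (∑ i, g (σ i) * a (σ i) z) = -(g j₀ * a j₀ z) := by
          have := hrel z
          linear_combination this
        rw [h2, h3, Fin.sum_univ_succAbove (fun j => a j z * b j ξ) j₀]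
        field_simp
        ring
      have hcont' : ∀ i, Continuous (a' i) := fun i => hacont (σ i)
      have hana' : ∀ i, AnalyticOnNhd ℂ (b' i) Set.univ := by
        intro i
        exact (hbana (σ i)).sub (analyticOnNhd_const.mul (hbana j₀))
      have hvan' : ∀ z ξ : Fin n → ℂ,
          (∑ k : Fin n, (if (k : ℕ) < ℓ then (-1 : ℂ) else 1) * z k * ξ k) = 0 →
          ∑ i, a' i z * b' i ξ = 0 := by
        intro z ξ hzero
        rw [htrans]
        exact hvan z ξ hzero
      intro z ξ
      rw [← htrans]
      exact ih (lt_trans (Nat.lt_succ_self r) hrn) a' b' hcont' hana' hvan' z ξ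

theorem huang_lemma_analytic (n ℓ : ℕ) (hn : 2 ≤ n) (hℓ : ℓ ≤ n)
    (φ ψ : Fin (n - 1) → (Fin n → ℂ) → ℂ)
    (hφ : ∀ j, AnalyticOnNhd ℂ (φ j) Set.univ)
    (hψ : ∀ j, AnalyticOnNhd ℂ (ψ j) Set.univ)
    (B : (Fin n → ℂ) × (Fin n → ℂ) → ℂ)
    (hB : AnalyticOnNhd ℝ B Set.univ)
    (heq : ∀ z ξ : Fin n → ℂ,
      ∑ j : Fin (n - 1), φ j z * ψ j ξ =
        B (z, ξ) * ∑ j : Fin n, (if (j : ℕ) < ℓ then (-1 : ℂ) else 1) * z j * ξ j) :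
    (∀ z ξ : Fin n → ℂ, B (z, ξ) = 0) ∧
    (∀ z ξ : Fin n → ℂ, ∑ j : Fin (n - 1), φ j z * ψ j ξ = 0) := by
  have hF : ∀ z ξ : Fin n → ℂ, ∑ j : Fin (n - 1), φ j z * ψ j ξ = 0 := by
    refine core n ℓ (n - 1) (Nat.sub_lt (by omega) (by omega)) φ ψ
      (fun j => continuousOn_univ.mp (hφ j).continuousOn) hψ ?_
    intro z ξ h0
    rw [heq z ξ, h0, mul_zero]
  refine ⟨?_, hF⟩
  set Qf : (Fin n → ℂ) × (Fin n → ℂ) → ℂ :=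
    fun x => ∑ j : Fin n, (if (j : ℕ) < ℓ then (-1 : ℂ) else 1) * x.1 j * x.2 j with hQfdef
  have hQan : AnalyticOnNhd ℂ Qf Set.univ := by
    rw [show Qf = ∑ j : Fin n, fun x : (Fin n → ℂ) × (Fin n → ℂ) =>
        (if (j : ℕ) < ℓ then (-1 : ℂ) else 1) * x.1 j * x.2 j from by
      funext x; simp only [hQfdef, Finset.sum_apply]]
    apply Finset.analyticOnNhd_sum
    intro j _
    apply AnalyticOnNhd.mul
    · apply AnalyticOnNhd.mul
      · exact analyticOnNhd_const
      · exact fun x _ =>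
          ((ContinuousLinearMap.proj j).comp
            (ContinuousLinearMap.fst ℂ (Fin n → ℂ) (Fin n → ℂ))).analyticAt x
    · exact fun x _ =>
        ((ContinuousLinearMap.proj j).comp
          (ContinuousLinearMap.snd ℂ (Fin n → ℂ) (Fin n → ℂ))).analyticAt x
  set i0 : Fin n := ⟨0, by omega⟩ with hi0
  set x0 : (Fin n → ℂ) × (Fin n → ℂ) := (Pi.single i0 1, Pi.single i0 1) with hx0
  have hQx0 : Qf x0 ≠ 0 := by
    have h1 : Qf x0 = (if (i0 : ℕ) < ℓ then (-1 : ℂ) else 1) := by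
      simp only [hQfdef]
      rw [Finset.sum_eq_single i0]
      · simp [hx0]
      · intro j _ hj
        simp [hx0, Pi.single_apply, hj]
      · intro h
        exact absurd (Finset.mem_univ i0) h
    rw [h1]
    split <;> norm_num
  have hQne : ∀ x : (Fin n → ℂ) × (Fin n → ℂ), ¬ (Qf =ᶠ[nhds x] 0) := by
    intro x hx
    have := hQan.eqOn_zero_of_preconnected_of_eventuallyEq_zero
      isPreconnected_univ (Set.mem_univ x) hx
    exact hQx0 (this (Set.mem_univ x0))
  intro z ξ
  by_contra hBx
  have hev : ∀ᶠ y in nhds (z, ξ), B y ≠ 0 :=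
    ((hB (z, ξ) (Set.mem_univ _)).continuousAt).eventually_ne hBx
  refine hQne (z, ξ) ?_
  filter_upwards [hev] with y hy
  have h1 : B (y.1, y.2) * Qf (y.1, y.2) = 0 := by
    rw [← heq y.1 y.2]
    exact hF y.1 y.2
  rcases mul_eq_zero.mp h1 with h | h
  · exact absurd h hy
  · exact h
end

section
/- Let n ≥ 1, s ≥ 1, and k, m ≥ 0 be integers. There exists a constant C > 0, depending only on s, with the following property: for any two families φ = {φ_j}_{j=1}^{s} and ψ = {ψ_j}_{j=1}^{s} of holomorphic polynomials on ℂⁿ of degree at most k and at most m respectively, there exist families φ̃ = {φ̃_j}_{j=1}^{s} and ψ̃ = {ψ̃_j}_{j=1}^{s} of holomorphic polynomials on ℂⁿ of degree at most k and at most m respectively, such that ∑_{j=1}^{s} φ_j(z) ψ_j(ξ) = ∑_{j=1}^{s} φ̃_j(z) ψ̃_j(ξ) identically in (z, ξ) ∈ ℂⁿ × ℂⁿ, ‖φ̃‖ ≤ 1, and C·‖ψ̃‖ ≤ ‖∑_{j=1}^{s} φ̃_j(z) ψ̃_j(ξ)‖ ≤ s·‖ψ̃‖. -/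
open MvPolynomial

/-- The norm of a finite family of polynomials: the maximum of the norms of its members. -/
noncomputable def famNorm {σ : Type*} {s : ℕ} (φ : Fin s → MvPolynomial σ ℂ) : ℝ :=
  ((Finset.univ.sup fun j : Fin s => (φ j).support.sup fun d => ‖(φ j).coeff d‖₊ : NNReal) : ℝ)

namespace NormAlg

variable {σ : Type*}

/-- The "tensor product" of two polynomials, in separated variables. -/
noncomputable def T (a b : MvPolynomial σ ℂ) : MvPolynomial (σ ⊕ σ) ℂ :=
  rename Sum.inl a * rename Sum.inr b

/-- Combine two exponent vectors into one on the sum type. -/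
noncomputable def emb (d e : σ →₀ ℕ) : σ ⊕ σ →₀ ℕ := Finsupp.sumElim d e

lemma emb_eq (d e : σ →₀ ℕ) :
    emb d e = Finsupp.mapDomain Sum.inl d + Finsupp.mapDomain Sum.inr e := by
  ext x
  cases x with
  | inl i =>
      rw [Finsupp.add_apply, Finsupp.mapDomain_apply Sum.inl_injective,
        Finsupp.mapDomain_notin_range]
      · simp [emb]
      · simp
  | inr i =>
      rw [Finsupp.add_apply, Finsupp.mapDomain_apply Sum.inr_injective,
        Finsupp.mapDomain_notin_range]
      · simp [emb]
      · simp

lemma emb_inj {d e d' e' : σ →₀ ℕ} (h : emb d e = emb d' e') : d = d' ∧ e = e' := by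
  have h1 : (Finsupp.sumFinsuppEquivProdFinsupp.symm (d, e) : σ ⊕ σ →₀ ℕ) =
      Finsupp.sumFinsuppEquivProdFinsupp.symm (d', e') := h
  have := Finsupp.sumFinsuppEquivProdFinsupp.symm.injective h1
  exact ⟨congrArg Prod.fst this, congrArg Prod.snd this⟩

lemma exists_emb (μ : σ ⊕ σ →₀ ℕ) : ∃ d e, μ = emb d e := by
  refine ⟨(Finsupp.sumFinsuppEquivProdFinsupp μ).1, (Finsupp.sumFinsuppEquivProdFinsupp μ).2, ?_⟩
  exact (Finsupp.sumFinsuppEquivProdFinsupp.symm_apply_apply μ).symm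

lemma T_monomial (d e : σ →₀ ℕ) (c c' : ℂ) :
    T (monomial d c) (monomial e c') = monomial (emb d e) (c * c') := by
  rw [T, rename_monomial, rename_monomial, monomial_mul, emb_eq]

lemma T_add_left (a a' b : MvPolynomial σ ℂ) : T (a + a') b = T a b + T a' b := by
  simp [T, add_mul]

lemma T_add_right (a b b' : MvPolynomial σ ℂ) : T a (b + b') = T a b + T a b' := by
  simp [T, mul_add]

lemma T_sub_left (a a' b : MvPolynomial σ ℂ) : T (a - a') b = T a b - T a' b := by
  simp [T, sub_mul]

lemma T_sub_right (a b b' : MvPolynomial σ ℂ) : T a (b - b') = T a b - T a b' := by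
  simp [T, mul_sub]

lemma T_smul_left (c : ℂ) (a b : MvPolynomial σ ℂ) : T (c • a) b = c • T a b := by
  simp [T, smul_mul_assoc]

lemma T_smul_right (c : ℂ) (a b : MvPolynomial σ ℂ) : T a (c • b) = c • T a b := by
  simp [T, mul_smul_comm]

lemma T_neg_right (a b : MvPolynomial σ ℂ) : T a (-b) = -T a b := by
  simp [T, mul_neg]

lemma T_zero_left (b : MvPolynomial σ ℂ) : T 0 b = 0 := by simp [T]

lemma T_zero_right (a : MvPolynomial σ ℂ) : T a 0 = 0 := by simp [T]

lemma T_sum_left {ι : Type*} (s : Finset ι) (f : ι → MvPolynomial σ ℂ) (b : MvPolynomial σ ℂ) :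
    T (∑ i ∈ s, f i) b = ∑ i ∈ s, T (f i) b := by
  simp [T, Finset.sum_mul]

lemma T_sum_right {ι : Type*} (s : Finset ι) (a : MvPolynomial σ ℂ) (f : ι → MvPolynomial σ ℂ) :
    T a (∑ i ∈ s, f i) = ∑ i ∈ s, T a (f i) := by
  simp [T, Finset.mul_sum]

lemma coeff_T (d e : σ →₀ ℕ) (a b : MvPolynomial σ ℂ) :
    coeff (emb d e) (T a b) = coeff d a * coeff e b := by
  classical
  induction a using MvPolynomial.induction_on' with
  | add p q hp hq => rw [T_add_left, coeff_add, hp, hq, coeff_add, add_mul]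
  | monomial u c =>
      induction b using MvPolynomial.induction_on' with
      | add p q hp hq => rw [T_add_right, coeff_add, hp, hq, coeff_add, mul_add]
      | monomial w c' =>
          rw [T_monomial, coeff_monomial, coeff_monomial, coeff_monomial]
          by_cases h1 : u = d
          · by_cases h2 : w = e
            · subst h1; subst h2; simp
            · rw [if_neg h2, mul_zero, if_neg]
              intro h; exact h2 (emb_inj h).2
          · rw [if_neg h1, zero_mul, if_neg]
            intro h; exact h1 (emb_inj h).1

/-! ### Norm lemmas -/

lemma polyNorm_nonneg {τ : Type*} (p : MvPolynomial τ ℂ) : 0 ≤ polyNorm p :=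
  NNReal.coe_nonneg _

lemma norm_coeff_le_polyNorm {τ : Type*} (p : MvPolynomial τ ℂ) (d : τ →₀ ℕ) :
    ‖coeff d p‖ ≤ polyNorm p := by
  by_cases h : d ∈ p.support
  · rw [← coe_nnnorm]
    exact NNReal.coe_le_coe.mpr (Finset.le_sup (f := fun d => ‖p.coeff d‖₊) h)
  · rw [MvPolynomial.notMem_support_iff.mp h]
    simpa using polyNorm_nonneg p

lemma polyNorm_le {τ : Type*} {p : MvPolynomial τ ℂ} {B : ℝ} (hB : 0 ≤ B)
    (h : ∀ d, ‖coeff d p‖ ≤ B) : polyNorm p ≤ B := by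
  have : (p.support.sup fun d => ‖p.coeff d‖₊) ≤ B.toNNReal := by
    refine Finset.sup_le fun d _ => ?_
    rw [← NNReal.coe_le_coe, coe_nnnorm, Real.coe_toNNReal _ hB]
    exact h d
  calc polyNorm p ≤ (B.toNNReal : ℝ) := NNReal.coe_le_coe.mpr this
    _ = B := Real.coe_toNNReal _ hB

lemma polyNorm_zero {τ : Type*} : polyNorm (0 : MvPolynomial τ ℂ) = 0 := by
  simp [polyNorm]

lemma exists_polyNorm_eq {τ : Type*} {p : MvPolynomial τ ℂ} (hp : p ≠ 0) :
    ∃ μ ∈ p.support, polyNorm p = ‖coeff μ p‖ := by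
  obtain ⟨μ, hμ, h⟩ := Finset.exists_mem_eq_sup p.support
    (MvPolynomial.support_nonempty.mpr hp) (fun d => ‖p.coeff d‖₊)
  exact ⟨μ, hμ, by rw [polyNorm, h, coe_nnnorm]⟩

lemma famNorm_nonneg {τ : Type*} {s : ℕ} (φ : Fin s → MvPolynomial τ ℂ) : 0 ≤ famNorm φ :=
  NNReal.coe_nonneg _

lemma norm_coeff_le_famNorm {τ : Type*} {s : ℕ} (φ : Fin s → MvPolynomial τ ℂ)
    (j : Fin s) (d : τ →₀ ℕ) : ‖coeff d (φ j)‖ ≤ famNorm φ := by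
  have h2 : ((φ j).support.sup fun d => ‖(φ j).coeff d‖₊) ≤
      (Finset.univ.sup fun j : Fin s => (φ j).support.sup fun d => ‖(φ j).coeff d‖₊) :=
    Finset.le_sup (f := fun j : Fin s => (φ j).support.sup fun d => ‖(φ j).coeff d‖₊)
      (Finset.mem_univ j)
  by_cases h : d ∈ (φ j).support
  · rw [← coe_nnnorm]
    exact NNReal.coe_le_coe.mpr ((Finset.le_sup (f := fun d => ‖(φ j).coeff d‖₊) h).trans h2)
  · rw [MvPolynomial.notMem_support_iff.mp h]
    simpa using famNorm_nonneg φ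

lemma famNorm_le {τ : Type*} {s : ℕ} {φ : Fin s → MvPolynomial τ ℂ} {B : ℝ} (hB : 0 ≤ B)
    (h : ∀ j d, ‖coeff d (φ j)‖ ≤ B) : famNorm φ ≤ B := by
  have : (Finset.univ.sup fun j : Fin s => (φ j).support.sup fun d => ‖(φ j).coeff d‖₊)
      ≤ B.toNNReal := by
    refine Finset.sup_le fun j _ => Finset.sup_le fun d _ => ?_
    rw [← NNReal.coe_le_coe, coe_nnnorm, Real.coe_toNNReal _ hB]
    exact h j d
  calc famNorm φ ≤ (B.toNNReal : ℝ) := NNReal.coe_le_coe.mpr this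
    _ = B := Real.coe_toNNReal _ hB

/-! ### The key inductive lemma -/

lemma key (k m : ℕ) : ∀ (t : ℕ) (a b : Fin t → MvPolynomial σ ℂ),
    (∀ j, (a j).totalDegree ≤ k) → (∀ j, (b j).totalDegree ≤ m) →
    ∃ u v : Fin t → MvPolynomial σ ℂ,
      (∀ j, (u j).totalDegree ≤ k) ∧ (∀ j, (v j).totalDegree ≤ m) ∧
      (∑ j, T (a j) (b j)) = ∑ j, T (u j) (v j) ∧
      (∀ j d, ‖coeff d (u j)‖ ≤ 1) ∧
      (∀ j e, ‖coeff e (v j)‖ ≤ 3 ^ t * polyNorm (∑ j, T (a j) (b j))) ∧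
      ((∑ j, T (a j) (b j)) ≠ 0 →
        ∃ j e, polyNorm (∑ j, T (a j) (b j)) ≤ ‖coeff e (v j)‖) := by
  intro t
  induction t with
  | zero =>
      intro a b _ _
      refine ⟨Fin.elim0, Fin.elim0, fun j => j.elim0, fun j => j.elim0, by simp,
        fun j => j.elim0, fun j => j.elim0, fun h => absurd (by simp) h⟩
  | succ r IH =>
      intro a b ha hb
      by_cases hF0 : (∑ j, T (a j) (b j)) = 0
      · refine ⟨fun _ => 0, fun _ => 0, fun j => by simp, fun j => by simp, ?_, ?_, ?_, ?_⟩
        · rw [hF0]; simp [T_zero_left]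
        · intro j d; simp
        · intro j e
          have := polyNorm_nonneg (∑ j, T (a j) (b j))
          simp only [coeff_zero, norm_zero]
          positivity
        · intro h; exact absurd hF0 h
      · -- main case
        set F := ∑ j, T (a j) (b j) with hF
        obtain ⟨μ₀, hμ₀mem, hμ₀⟩ := exists_polyNorm_eq hF0
        obtain ⟨d₀, e₀, hμeq⟩ := exists_emb μ₀
        set N := polyNorm F with hNdef
        set F₀ := coeff μ₀ F with hF₀def
        have hF₀ : F₀ ≠ 0 := MvPolynomial.mem_support_iff.mp hμ₀mem
        have hN : N = ‖F₀‖ := hμ₀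
        have hNpos : 0 < N := by rw [hN]; exact norm_pos_iff.mpr hF₀
        -- the pivot column and row
        set v₀ : MvPolynomial σ ℂ := ∑ j, (coeff d₀ (a j)) • (b j) with hv₀
        set u₀ : MvPolynomial σ ℂ := F₀⁻¹ • ∑ j, (coeff e₀ (b j)) • (a j) with hu₀
        have hcv : ∀ e, coeff e v₀ = coeff (emb d₀ e) F := by
          intro e
          rw [hv₀, hF, coeff_sum, coeff_sum]
          refine Finset.sum_congr rfl fun j _ => ?_
          rw [coeff_smul, coeff_T, smul_eq_mul]
        have hcu : ∀ d, coeff d u₀ = F₀⁻¹ * coeff (emb d e₀) F := by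
          intro d
          rw [hu₀, coeff_smul, smul_eq_mul, hF, coeff_sum, coeff_sum]
          congr 1
          refine Finset.sum_congr rfl fun j _ => ?_
          rw [coeff_smul, coeff_T, smul_eq_mul, mul_comm]
        have hv₀e₀ : coeff e₀ v₀ = F₀ := by rw [hcv, ← hμeq]
        have hu₀d₀ : coeff d₀ u₀ = 1 := by
          rw [hcu, ← hμeq, inv_mul_cancel₀ hF₀]
        have hub₀ : ∀ d, ‖coeff d u₀‖ ≤ 1 := by
          intro d
          rw [hcu, norm_mul, norm_inv]
          rw [inv_mul_le_one₀ (by rw [← hN]; exact hNpos)]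
          rw [← hN]
          exact norm_coeff_le_polyNorm F (emb d e₀)
        have hvb₀ : ∀ e, ‖coeff e v₀‖ ≤ N := fun e => by
          rw [hcv]; exact norm_coeff_le_polyNorm F (emb d₀ e)
        have hdu₀ : u₀.totalDegree ≤ k := by
          refine (totalDegree_smul_le _ _).trans ?_
          refine (totalDegree_finset_sum _ _).trans (Finset.sup_le fun j _ => ?_)
          exact (totalDegree_smul_le _ _).trans (ha j)
        have hdv₀ : v₀.totalDegree ≤ m := by
          refine (totalDegree_finset_sum _ _).trans (Finset.sup_le fun j _ => ?_)
          exact (totalDegree_smul_le _ _).trans (hb j)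
        set b' : Fin (r+1) → MvPolynomial σ ℂ :=
          fun j => b j - (F₀⁻¹ * coeff e₀ (b j)) • v₀ with hb'
        have hb'app : ∀ j, b' j = b j - (F₀⁻¹ * coeff e₀ (b j)) • v₀ := fun j => rfl
        have hdb' : ∀ j, (b' j).totalDegree ≤ m := by
          intro j
          rw [hb'app, sub_eq_add_neg]
          refine (totalDegree_add _ _).trans (max_le (hb j) ?_)
          rw [totalDegree_neg]
          exact (totalDegree_smul_le _ _).trans hdv₀
        have hTu₀v₀ : T u₀ v₀ = ∑ j, (F₀⁻¹ * coeff e₀ (b j)) • T (a j) v₀ := by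
          rw [hu₀, T_smul_left, T_sum_left, Finset.smul_sum]
          refine Finset.sum_congr rfl fun j _ => ?_
          rw [T_smul_left, smul_smul]
        have hrepr : ∑ j, T (a j) (b' j) = F - T u₀ v₀ := by
          have : ∀ j : Fin (r+1), T (a j) (b' j) =
              T (a j) (b j) - (F₀⁻¹ * coeff e₀ (b j)) • T (a j) v₀ := fun j => by
            rw [hb'app, T_sub_right, T_smul_right]
          rw [Finset.sum_congr rfl fun j _ => this j, Finset.sum_sub_distrib, ← hF, hTu₀v₀]
        have hrow : ∑ j, (coeff d₀ (a j)) • b' j = 0 := by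
          have h1 : ∀ j : Fin (r+1), (coeff d₀ (a j)) • b' j =
              (coeff d₀ (a j)) • b j -
                (coeff d₀ (a j) * (F₀⁻¹ * coeff e₀ (b j))) • v₀ := fun j => by
            rw [hb'app, smul_sub, smul_smul]
          rw [Finset.sum_congr rfl fun j _ => h1 j, Finset.sum_sub_distrib, ← hv₀,
            ← Finset.sum_smul]
          have h2 : ∑ j, coeff d₀ (a j) * (F₀⁻¹ * coeff e₀ (b j)) = 1 := by
            have h3 : coeff e₀ v₀ = ∑ j, coeff d₀ (a j) * coeff e₀ (b j) := by
              rw [hv₀, coeff_sum]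
              exact Finset.sum_congr rfl fun j _ => by rw [coeff_smul, smul_eq_mul]
            calc ∑ j, coeff d₀ (a j) * (F₀⁻¹ * coeff e₀ (b j))
                = F₀⁻¹ * ∑ j, coeff d₀ (a j) * coeff e₀ (b j) := by
                  rw [Finset.mul_sum]; exact Finset.sum_congr rfl fun j _ => by ring
              _ = F₀⁻¹ * F₀ := by rw [← h3, hv₀e₀]
              _ = 1 := inv_mul_cancel₀ hF₀
          rw [h2, one_smul, sub_self]
        have hj₁ : ∃ j₁, coeff d₀ (a j₁) ≠ 0 := by
          by_contra h
          push_neg at h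
          have hv0 : v₀ = 0 := by
            rw [hv₀]
            exact Finset.sum_eq_zero fun j _ => by rw [h j, zero_smul]
          rw [hv0, coeff_zero] at hv₀e₀
          exact hF₀ hv₀e₀.symm
        obtain ⟨j₁, hj₁⟩ := hj₁
        set c₁ := coeff d₀ (a j₁) with hc₁
        set a'' : Fin r → MvPolynomial σ ℂ := fun i =>
          a (j₁.succAbove i) - (c₁⁻¹ * coeff d₀ (a (j₁.succAbove i))) • a j₁ with ha''
        have ha''app : ∀ i, a'' i =
            a (j₁.succAbove i) - (c₁⁻¹ * coeff d₀ (a (j₁.succAbove i))) • a j₁ := fun i => rfl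
        set b'' : Fin r → MvPolynomial σ ℂ := fun i => b' (j₁.succAbove i) with hb''
        have hb''app : ∀ i, b'' i = b' (j₁.succAbove i) := fun i => rfl
        have hda'' : ∀ i, (a'' i).totalDegree ≤ k := by
          intro i
          rw [ha''app, sub_eq_add_neg]
          refine (totalDegree_add _ _).trans (max_le (ha _) ?_)
          rw [totalDegree_neg]
          exact (totalDegree_smul_le _ _).trans (ha j₁)
        have hdb'' : ∀ i, (b'' i).totalDegree ≤ m := fun i => hdb' _
        have hS : ∑ i : Fin r, (coeff d₀ (a (j₁.succAbove i))) • b' (j₁.succAbove i)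
            = -(c₁ • b' j₁) := by
          have := hrow
          rw [Fin.sum_univ_succAbove (fun j => (coeff d₀ (a j)) • b' j) j₁] at this
          linear_combination (norm := abel) this
        have hF' : ∑ i, T (a'' i) (b'' i) = F - T u₀ v₀ := by
          have h1 : ∀ i : Fin r, T (a'' i) (b'' i) =
              T (a (j₁.succAbove i)) (b' (j₁.succAbove i)) -
                (c₁⁻¹ * coeff d₀ (a (j₁.succAbove i))) • T (a j₁) (b' (j₁.succAbove i)) := by
            intro i
            rw [hb''app, ha''app, T_sub_left, T_smul_left]
          rw [Finset.sum_congr rfl fun i _ => h1 i, Finset.sum_sub_distrib]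
          have h2 : ∑ i : Fin r, (c₁⁻¹ * coeff d₀ (a (j₁.succAbove i))) •
              T (a j₁) (b' (j₁.succAbove i)) = -(T (a j₁) (b' j₁)) := by
            have h3 : ∀ i : Fin r, (c₁⁻¹ * coeff d₀ (a (j₁.succAbove i))) •
                T (a j₁) (b' (j₁.succAbove i)) =
                c₁⁻¹ • T (a j₁) ((coeff d₀ (a (j₁.succAbove i))) • b' (j₁.succAbove i)) := by
              intro i
              rw [T_smul_right, smul_smul]
            rw [Finset.sum_congr rfl fun i _ => h3 i, ← Finset.smul_sum, ← T_sum_right, hS]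
            rw [T_neg_right, T_smul_right, smul_neg, smul_smul, inv_mul_cancel₀ hj₁, one_smul]
          rw [h2, sub_neg_eq_add, ← hrepr,
            Fin.sum_univ_succAbove (fun j => T (a j) (b' j)) j₁]
          abel
        have hF'norm : polyNorm (∑ i, T (a'' i) (b'' i)) ≤ 2 * N := by
          rw [hF']
          refine polyNorm_le (by positivity) fun μ => ?_
          obtain ⟨d, e, rfl⟩ := exists_emb μ
          rw [coeff_sub, coeff_T]
          calc ‖coeff (emb d e) F - coeff d u₀ * coeff e v₀‖
              ≤ ‖coeff (emb d e) F‖ + ‖coeff d u₀‖ * ‖coeff e v₀‖ := by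
                refine (norm_sub_le _ _).trans ?_
                rw [norm_mul]
            _ ≤ N + 1 * N := by
                refine add_le_add (norm_coeff_le_polyNorm F _) ?_
                exact mul_le_mul (hub₀ d) (hvb₀ e) (norm_nonneg _) zero_le_one
            _ = 2 * N := by ring
        obtain ⟨u', v', hdu', hdv', hsum', hub', hvb', _⟩ := IH a'' b'' hda'' hdb''
        refine ⟨Fin.cons u₀ u', Fin.cons v₀ v', ?_, ?_, ?_, ?_, ?_, ?_⟩
        · intro j
          refine Fin.cases ?_ ?_ j
          · simpa using hdu₀
          · intro i; simpa using hdu' i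
        · intro j
          refine Fin.cases ?_ ?_ j
          · simpa using hdv₀
          · intro i; simpa using hdv' i
        · rw [Fin.sum_univ_succ]
          simp only [Fin.cons_succ, Fin.cons_zero]
          rw [← hsum', hF']
          abel
        · intro j
          refine Fin.cases ?_ ?_ j
          · intro d; simpa using hub₀ d
          · intro i d; simpa using hub' i d
        · intro j
          refine Fin.cases ?_ ?_ j
          · intro e
            simp only [Fin.cons_zero]
            refine (hvb₀ e).trans ?_
            nlinarith [pow_pos (by norm_num : (0:ℝ) < 3) (r+1),
              one_le_pow₀ (by norm_num : (1:ℝ) ≤ 3) (n := r+1)]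
          · intro i e
            simp only [Fin.cons_succ]
            refine (hvb' i e).trans ?_
            have h3 : polyNorm (∑ i, T (a'' i) (b'' i)) ≤ 2 * N := hF'norm
            have h4 : (0:ℝ) ≤ 3 ^ r := by positivity
            calc (3:ℝ) ^ r * polyNorm (∑ i, T (a'' i) (b'' i)) ≤ 3 ^ r * (2 * N) := by
                  exact mul_le_mul_of_nonneg_left h3 h4
              _ ≤ 3 ^ (r+1) * N := by rw [pow_succ]; nlinarith
        · intro _
          refine ⟨0, e₀, ?_⟩
          simp only [Fin.cons_zero]
          rw [hv₀e₀]
          exact hN.le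

end NormAlg

theorem normalization_algorithm (s : ℕ) (hs : 1 ≤ s) :
    ∃ C : ℝ, 0 < C ∧
      ∀ (n : ℕ), 1 ≤ n → ∀ (k m : ℕ) (φ ψ : Fin s → MvPolynomial (Fin n) ℂ),
        (∀ j, (φ j).totalDegree ≤ k) →
        (∀ j, (ψ j).totalDegree ≤ m) →
        ∃ φt ψt : Fin s → MvPolynomial (Fin n) ℂ,
          (∀ j, (φt j).totalDegree ≤ k) ∧
          (∀ j, (ψt j).totalDegree ≤ m) ∧
          (∑ j : Fin s,
              MvPolynomial.rename Sum.inl (φ j) * MvPolynomial.rename Sum.inr (ψ j)) =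
            (∑ j : Fin s,
              MvPolynomial.rename Sum.inl (φt j) * MvPolynomial.rename Sum.inr (ψt j)) ∧
          famNorm φt ≤ 1 ∧
          C * famNorm ψt ≤ polyNorm (∑ j : Fin s,
              MvPolynomial.rename Sum.inl (φt j) * MvPolynomial.rename Sum.inr (ψt j)) ∧
          polyNorm (∑ j : Fin s,
              MvPolynomial.rename Sum.inl (φt j) * MvPolynomial.rename Sum.inr (ψt j)) ≤
            (s : ℝ) * famNorm ψt := by
  classical
  refine ⟨((3 : ℝ) ^ s)⁻¹, by positivity, ?_⟩
  intro n _ k m φ ψ hφ hψ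
  obtain ⟨u, v, hdu, hdv, hsum, hub, hvb, hlow⟩ := NormAlg.key k m s φ ψ hφ hψ
  have hTdef : (∑ j : Fin s,
      MvPolynomial.rename Sum.inl (u j) * MvPolynomial.rename Sum.inr (v j)) =
      ∑ j : Fin s, NormAlg.T (u j) (v j) := rfl
  refine ⟨u, v, hdu, hdv, hsum, ?_, ?_, ?_⟩
  · exact NormAlg.famNorm_le zero_le_one fun j d => hub j d
  · -- C * famNorm v ≤ polyNorm F
    rw [hTdef, ← hsum]
    have h1 : famNorm v ≤ 3 ^ s * polyNorm (∑ j, NormAlg.T (φ j) (ψ j)) :=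
      NormAlg.famNorm_le
        (mul_nonneg (by positivity) (NormAlg.polyNorm_nonneg _)) hvb
    rw [inv_mul_le_iff₀ (by positivity : (0:ℝ) < 3 ^ s)]
    exact h1
  · rw [hTdef, ← hsum]
    by_cases hF : (∑ j, NormAlg.T (φ j) (ψ j)) = 0
    · rw [hF, NormAlg.polyNorm_zero]
      have := NormAlg.famNorm_nonneg v
      positivity
    · obtain ⟨j, e, hje⟩ := hlow hF
      calc polyNorm (∑ j, NormAlg.T (φ j) (ψ j)) ≤ ‖MvPolynomial.coeff e (v j)‖ := hje
        _ ≤ famNorm v := NormAlg.norm_coeff_le_famNorm v j e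
        _ ≤ (s : ℝ) * famNorm v := by
            have := NormAlg.famNorm_nonneg v
            have hs' : (1 : ℝ) ≤ (s : ℝ) := by exact_mod_cast hs
            nlinarith
end
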